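/- arXiv:2403.08374 — 3 statements merged into one kernel-verified Lean document; each statement's English description precedes it below -/
import Mathlib

section
/- Let F be a field, let n, k, e be natural numbers with k + 2*e ≤ n, let a : Fin n → F be an injective assignment of evaluation points, and let f : Fin n → F be a received word. If there exists a polynomial p over F of degree less than k such that the set {i : Fin n | f i ≠ p.eval (a i)} has cardinality at most e, then there exists a unique polynomial of degree less than k whose disagreement set with f has cardinality at most e. (Existence and uniqueness of the output of RSDec(k, e, ·) when the received word is within Hamming distance e of a codeword.) -/
/-- Existence and uniqueness of the output of `RSDec(k, e, ·)` when the received word is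
within Hamming distance `e` of a codeword. -/
theorem rs_decoder_exists_unique
    {F : Type*} [Field F] (n k e : ℕ) (hkn : k + 2 * e ≤ n)
    (a : Fin n → F) (ha : Function.Injective a)
    (f : Fin n → F)
    (hex : ∃ p : Polynomial F, p.degree < (k : ℕ) ∧
      Set.ncard {i : Fin n | f i ≠ p.eval (a i)} ≤ e) :
    ∃! p : Polynomial F, p.degree < (k : ℕ) ∧
      Set.ncard {i : Fin n | f i ≠ p.eval (a i)} ≤ e := by
  classical
  obtain ⟨p, hpd, hpe⟩ := hex
  refine ⟨p, ⟨hpd, hpe⟩, ?_⟩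
  rintro q ⟨hqd, hqe⟩
  by_contra hne
  have hd : q - p ≠ 0 := sub_ne_zero.mpr hne
  -- good indices
  set A : Finset (Fin n) :=
    Finset.univ.filter (fun i => f i = p.eval (a i) ∧ f i = q.eval (a i)) with hA
  have hcardSet : ∀ r : Polynomial F,
      Set.ncard {i : Fin n | f i ≠ r.eval (a i)}
        = (Finset.univ.filter (fun i => f i ≠ r.eval (a i))).card := by
    intro r
    rw [Set.ncard_eq_toFinset_card']
    congr 1
    ext i
    simp
  have hcompl : Aᶜ ⊆ (Finset.univ.filter (fun i => f i ≠ p.eval (a i)))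
      ∪ (Finset.univ.filter (fun i => f i ≠ q.eval (a i))) := by
    intro i hi
    simp only [hA, Finset.mem_compl, Finset.mem_filter, Finset.mem_univ, true_and,
      Finset.mem_union, not_and_or] at hi ⊢
    tauto
  have hAcompl : Aᶜ.card ≤ 2 * e := by
    calc Aᶜ.card ≤ _ := Finset.card_le_card hcompl
    _ ≤ _ + _ := Finset.card_union_le _ _
    _ ≤ e + e := by
        rw [← hcardSet, ← hcardSet]; exact Nat.add_le_add hpe hqe
    _ = 2 * e := by ring
  have hAcard : k ≤ A.card := by
    have := Finset.card_compl_add_card A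
    simp only [Fintype.card_fin] at this
    omega
  have hdeg : (q - p).natDegree < k := by
    rw [Polynomial.natDegree_lt_iff_degree_lt hd]
    exact lt_of_le_of_lt (Polynomial.degree_sub_le _ _) (max_lt hqd hpd)
  have : q - p = 0 := by
    apply Polynomial.eq_zero_of_natDegree_lt_card_of_eval_eq_zero' (q - p) (A.image a)
    · intro x hx
      simp only [Finset.mem_image] at hx
      obtain ⟨i, hi, rfl⟩ := hx
      simp only [hA, Finset.mem_filter] at hi
      simp [Polynomial.eval_sub, ← hi.2.1, ← hi.2.2]
    · rw [Finset.card_image_of_injective _ ha]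
      omega
  exact hd this
end

section
/- Let F be a field and let x', y' be natural numbers with 3*y' < x'. Let a : Fin x' → F be an injective assignment of evaluation points, let S be a finite subset of Fin x' with x' − y' ≤ |S|, and let f : Fin x' → F be the received symbols. Let p be a polynomial over F of degree less than y' + 1 such that the set {i ∈ S | f i ≠ p.eval (a i)} has cardinality at most |S| − (x' − y'). Then for every polynomial q over F of degree less than y' + 1 such that the set {i ∈ S | f i ≠ q.eval (a i)} has cardinality at most |S| − (x' − y'), we have q = p. (Coding-theoretic core of the Safety theorem for the committee dissemination protocol, Algorithm 3: a process that receives rec = |S| ≥ x' − y' symbols, at most rec − (x' − y') of which are erroneous, and decodes with RSDec(y' + 1, rec − (x' − y'), ·) can only obtain the committee's common value.) -/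
/-- Coding-theoretic core of the Safety theorem for the committee dissemination protocol:
a receiver collecting `|S| ≥ x' - y'` symbols, at most `|S| - (x' - y')` of which are
erroneous, can only decode to the unique polynomial of degree `< y' + 1` encoding the
committee's common value. -/
theorem committee_dissemination_safety
    {F : Type*} [Field F] (x' y' : ℕ) (hxy : 3 * y' < x')
    (a : Fin x' → F) (ha : Function.Injective a)
    (S : Finset (Fin x')) (hS : x' - y' ≤ S.card)
    (f : Fin x' → F)
    (p : Polynomial F) (hp : p.degree < (y' + 1 : ℕ))
    (hpe : Set.ncard {i : Fin x' | i ∈ S ∧ f i ≠ p.eval (a i)} ≤ S.card - (x' - y')) :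
    ∀ q : Polynomial F, q.degree < (y' + 1 : ℕ) →
      Set.ncard {i : Fin x' | i ∈ S ∧ f i ≠ q.eval (a i)} ≤ S.card - (x' - y') →
      q = p := by
  classical
  intro q hq hqe
  set Tp := S.filter (fun i => f i ≠ p.eval (a i)) with hTp
  set Tq := S.filter (fun i => f i ≠ q.eval (a i)) with hTq
  have hset_p : {i : Fin x' | i ∈ S ∧ f i ≠ p.eval (a i)} = ↑Tp := by
    ext i; simp [hTp]
  have hset_q : {i : Fin x' | i ∈ S ∧ f i ≠ q.eval (a i)} = ↑Tq := by
    ext i; simp [hTq]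
  rw [hset_p, Set.ncard_coe_finset] at hpe
  rw [hset_q, Set.ncard_coe_finset] at hqe
  have hScard : S.card ≤ x' := by
    simpa using S.card_le_univ
  have hGcard : y' + 1 ≤ (S \ (Tp ∪ Tq)).card := by
    have h1 : S.card - (Tp ∪ Tq).card ≤ (S \ (Tp ∪ Tq)).card :=
      Finset.le_card_sdiff _ _
    have h2 : (Tp ∪ Tq).card ≤ Tp.card + Tq.card := Finset.card_union_le _ _
    omega
  have heval : ∀ i ∈ S \ (Tp ∪ Tq), (q - p).eval (a i) = 0 := by
    intro i hi
    simp only [Finset.mem_sdiff, Finset.mem_union, hTp, hTq,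
      Finset.mem_filter, not_or, not_and, not_not] at hi
    have hpv := hi.2.1 hi.1
    have hqv := hi.2.2 hi.1
    simp [Polynomial.eval_sub, ← hpv, ← hqv]
  have hdeg : (q - p).degree < (y' + 1 : ℕ) := lt_of_le_of_lt (Polynomial.degree_sub_le q p) (max_lt hq hp)
  have hndeg : (q - p).natDegree < y' + 1 := by
    rcases eq_or_ne (q - p) 0 with h0 | h0
    · simp [h0]
    · exact (Polynomial.natDegree_lt_iff_degree_lt h0).2 hdeg
  have : q - p = 0 := by
    apply Polynomial.eq_zero_of_natDegree_lt_card_of_eval_eq_zero' (q - p)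
      ((S \ (Tp ∪ Tq)).image a)
    · intro x hx
      rcases Finset.mem_image.1 hx with ⟨i, hi, rfl⟩
      exact heval i hi
    · rw [Finset.card_image_of_injective _ ha]
      omega
  exact sub_eq_zero.1 this
end

section
/- Let c and L be natural numbers and let f : ℕ → ℕ satisfy f 1 ≤ c and, for every n ≥ 2, f n ≤ c * (n * L + n^2 * Nat.log 2 n) + f ((n + 1) / 2) + f (n / 2), where division is natural-number division and Nat.log 2 is the base-2 logarithm on ℕ. Then there exists a constant C (depending only on c) such that for every n ≥ 1, f n ≤ C * (n * (Nat.log 2 n + 1) * L + n^2 * (Nat.log 2 n + 1)). (Bit complexity of EXT: the recurrence B(n) = O(nL + n² log n) + B(⌈n/2⌉) + B(⌊n/2⌋) has solution B(n) ∈ O(n log(n) L + n² log(n)).) -/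
/-!
Three times the bound `(n L + n²)(log₂ n + 1)` pays for the non-recursive cost at `n` out of its
own slack: passing from `n` to its halves `⌈n/2⌉, ⌊n/2⌋`, the logarithm of `⌊n/2⌋` drops by exactly one,
which frees `3 ⌊n/2⌋ L ≥ n L` in the linear term and `6 ⌈n/2⌉ ⌊n/2⌋ log₂ n ≥ n² log₂ n` in the
quadratic one. Strong induction with constant `3c` then closes the recurrence.
-/

def extBound (L n : ℕ) : ℕ := (n * L + n ^ 2) * (Nat.log 2 n + 1)

lemma extBound_split_le (L a b k : ℕ) (hba : b ≤ a) (hab : a + b ≤ 3 * b) :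
    (a + b) * L + (a + b) ^ 2 * k + 3 * ((a * L + a ^ 2) * (k + 1)) + 3 * ((b * L + b ^ 2) * k)
      ≤ 3 * (((a + b) * L + (a + b) ^ 2) * (k + 1)) := by
  have hsq : (a + b) ^ 2 ≤ 6 * (a * b) := by nlinarith
  nlinarith [Nat.mul_le_mul_right L hab, Nat.mul_le_mul_right k hsq]

lemma log_two_half_add_one {n : ℕ} (hn : 2 ≤ n) : Nat.log 2 (n / 2) + 1 = Nat.log 2 n := by
  have hpos : 0 < Nat.log 2 n := Nat.log_pos (by norm_num) hn
  rw [Nat.log_div_base]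
  omega

lemma extBound_halves_le (L : ℕ) {n : ℕ} (hn : 2 ≤ n) :
    n * L + n ^ 2 * Nat.log 2 n + 3 * extBound L ((n + 1) / 2) + 3 * extBound L (n / 2)
      ≤ 3 * extBound L n := by
  have hsum : (n + 1) / 2 + n / 2 = n := by omega
  have hlog_ceil : Nat.log 2 ((n + 1) / 2) ≤ Nat.log 2 n := Nat.log_mono_right (by omega)
  have hceil : extBound L ((n + 1) / 2)
      ≤ ((n + 1) / 2 * L + ((n + 1) / 2) ^ 2) * (Nat.log 2 n + 1) :=
    Nat.mul_le_mul_left _ (by omega)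
  have hfloor : extBound L (n / 2) = (n / 2 * L + (n / 2) ^ 2) * Nat.log 2 n := by
    rw [extBound, log_two_half_add_one hn]
  have key := extBound_split_le L ((n + 1) / 2) (n / 2) (Nat.log 2 n) (by omega) (by omega)
  rw [hsum] at key
  have hn_bound : extBound L n = (n * L + n ^ 2) * (Nat.log 2 n + 1) := rfl
  omega

lemma le_three_mul_extBound {c L : ℕ} {f : ℕ → ℕ} (h1 : f 1 ≤ c)
    (hrec : ∀ n, 2 ≤ n →
      f n ≤ c * (n * L + n ^ 2 * Nat.log 2 n) + f ((n + 1) / 2) + f (n / 2)) :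
    ∀ n, 1 ≤ n → f n ≤ 3 * c * extBound L n := by
  intro n
  induction n using Nat.strong_induction_on with
  | _ n ih =>
    intro hn
    obtain rfl | hn2 : n = 1 ∨ 2 ≤ n := by omega
    · simp only [extBound, Nat.log_one_right]
      nlinarith
    · have hceil := ih ((n + 1) / 2) (by omega) (by omega)
      have hfloor := ih (n / 2) (by omega) (by omega)
      calc f n ≤ c * (n * L + n ^ 2 * Nat.log 2 n) + f ((n + 1) / 2) + f (n / 2) := hrec n hn2
        _ ≤ c * (n * L + n ^ 2 * Nat.log 2 n + 3 * extBound L ((n + 1) / 2)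
              + 3 * extBound L (n / 2)) := by nlinarith
        _ ≤ c * (3 * extBound L n) := Nat.mul_le_mul_left c (extBound_halves_le L hn2)
        _ = 3 * c * extBound L n := by ring

/-- Bit complexity of EXT: the recurrence `B(1) ≤ c` and
`B(n) ≤ c * (n*L + n² * log₂ n) + B(⌈n/2⌉) + B(⌊n/2⌋)` for `n ≥ 2` has solution
`B(n) ∈ O(n log(n) L + n² log(n))`, with the hidden constant depending only on `c`. -/
theorem ext_bit_complexity (c : ℕ) :
    ∃ C : ℕ, ∀ (L : ℕ) (f : ℕ → ℕ),
      f 1 ≤ c →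
      (∀ n, 2 ≤ n →
        f n ≤ c * (n * L + n ^ 2 * Nat.log 2 n) + f ((n + 1) / 2) + f (n / 2)) →
      ∀ n, 1 ≤ n →
        f n ≤ C * (n * (Nat.log 2 n + 1) * L + n ^ 2 * (Nat.log 2 n + 1)) := by
  refine ⟨3 * c, fun L f h1 hrec n hn => ?_⟩
  have hbound := le_three_mul_extBound h1 hrec n hn
  rw [extBound] at hbound
  linarith
end
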